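/- For every real α with 1 < α < 2, the function f₂ : [0,1] → ℝ defined by f₂(x) = (1 − √x)^(2−α) + (1 + √x)^(2−α) is concave on the interval [0,1]. -/

import Mathlib

open Real Set Filter

private lemma keyF_deriv (q : ℝ) (hq : 1 ≤ q) (t : ℝ) :
    HasDerivAt (fun t : ℝ => (1 + q*t) * (1-t) ^ q - (1 - q*t) * (1+t) ^ q)
      (q * (1-t) ^ q + (1 + q*t) * (q * (1-t) ^ (q-1) * (-1))
        - ((-1*q) * (1+t) ^ q + (1 - q*t) * (q * (1+t) ^ (q-1) * 1))) t := by
  have h1 : HasDerivAt (fun t : ℝ => (1-t:ℝ)) (-1) t := by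
    simpa using (hasDerivAt_id t).const_sub 1
  have h2 : HasDerivAt (fun t : ℝ => (1+t:ℝ)) 1 t := by
    simpa using (hasDerivAt_id t).const_add 1
  have h3 : HasDerivAt (fun t : ℝ => (1-t:ℝ) ^ q) (q * (1-t) ^ (q-1) * (-1)) t :=
    (Real.hasDerivAt_rpow_const (p := q) (Or.inr hq)).comp t h1
  have h4 : HasDerivAt (fun t : ℝ => (1+t:ℝ) ^ q) (q * (1+t) ^ (q-1) * 1) t :=
    (Real.hasDerivAt_rpow_const (p := q) (Or.inr hq)).comp t h2
  have h5 : HasDerivAt (fun t : ℝ => (1 + q*t : ℝ)) q t := by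
    simpa using ((hasDerivAt_id t).const_mul q).const_add 1
  have h6 : HasDerivAt (fun t : ℝ => (1 - q*t : ℝ)) (-1*q) t := by
    simpa using ((hasDerivAt_id t).const_mul q).const_sub 1
  exact (h5.mul h3).sub (h6.mul h4)

private lemma key_ineq (q : ℝ) (hq : 1 ≤ q) {s : ℝ} (hs0 : 0 ≤ s) (hs1 : s ≤ 1) :
    (1 - q*s) * (1+s) ^ q ≤ (1 + q*s) * (1-s) ^ q := by
  set F : ℝ → ℝ := fun t => (1 + q*t) * (1-t) ^ q - (1 - q*t) * (1+t) ^ q with hF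
  have hmono : MonotoneOn F (Icc 0 1) := by
    apply monotoneOn_of_deriv_nonneg (convex_Icc 0 1)
    · exact fun t _ => ((keyF_deriv q hq t).continuousAt).continuousWithinAt
    · exact fun t _ => ((keyF_deriv q hq t).differentiableAt).differentiableWithinAt
    · intro t ht
      rw [interior_Icc] at ht
      obtain ⟨ht0, ht1⟩ := ht
      rw [(keyF_deriv q hq t).deriv]
      have h1t : (0:ℝ) < 1 - t := by linarith
      have h1t' : (0:ℝ) < 1 + t := by linarith
      have e1 : (1-t:ℝ) ^ q = (1-t) ^ (q-1) * (1-t) := by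
        rw [← Real.rpow_add_one h1t.ne']; congr 1; ring
      have e2 : (1+t:ℝ) ^ q = (1+t) ^ (q-1) * (1+t) := by
        rw [← Real.rpow_add_one h1t'.ne']; congr 1; ring
      have hle : (1-t:ℝ) ^ (q-1) ≤ (1+t) ^ (q-1) :=
        Real.rpow_le_rpow h1t.le (by linarith) (by linarith)
      rw [e1, e2]
      nlinarith [mul_le_mul_of_nonneg_left hle
        (show (0:ℝ) ≤ q * t * (1+q) from mul_nonneg (mul_nonneg (by linarith) ht0.le) (by linarith))]
  have h0 : F 0 = 0 := by simp [hF]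
  have := hmono (Set.mem_Icc.2 ⟨le_refl 0, zero_le_one⟩) (Set.mem_Icc.2 ⟨hs0, hs1⟩) hs0
  rw [h0] at this
  simp only [hF] at this
  linarith

theorem f2_concave (α : ℝ) (hα1 : 1 < α) (hα2 : α < 2) :
    ConcaveOn ℝ (Set.Icc (0 : ℝ) 1)
      (fun x : ℝ => (1 - Real.sqrt x) ^ (2 - α) + (1 + Real.sqrt x) ^ (2 - α)) := by
  set p : ℝ := 2 - α with hpdef
  have hp0 : 0 < p := by simp [hpdef]; linarith
  have hp1 : p < 1 := by simp [hpdef]; linarith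
  set f : ℝ → ℝ := fun x => (1 - Real.sqrt x) ^ p + (1 + Real.sqrt x) ^ p with hfdef
  set f₁ : ℝ → ℝ := fun x => p * (1 - Real.sqrt x) ^ (p-1) * (-(2 * Real.sqrt x)⁻¹)
      + p * (1 + Real.sqrt x) ^ (p-1) * (2 * Real.sqrt x)⁻¹ with hf1def
  have haux : ∀ x ∈ Ioo (0:ℝ) 1, HasDerivAt f (f₁ x) x := by
    intro x hx
    have hs0 : 0 < Real.sqrt x := Real.sqrt_pos.2 hx.1
    have hs1 : Real.sqrt x < 1 := by
      rw [show (1:ℝ) = Real.sqrt 1 by simp]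
      exact Real.sqrt_lt_sqrt hx.1.le hx.2
    have hsq : HasDerivAt Real.sqrt ((2 * Real.sqrt x)⁻¹) x := by
      simpa [one_div] using Real.hasDerivAt_sqrt hx.1.ne'
    have h1 : HasDerivAt (fun x : ℝ => 1 - Real.sqrt x) (-(2 * Real.sqrt x)⁻¹) x :=
      hsq.const_sub 1
    have h2 : HasDerivAt (fun x : ℝ => 1 + Real.sqrt x) ((2 * Real.sqrt x)⁻¹) x :=
      hsq.const_add 1
    have g1 : HasDerivAt (fun x : ℝ => (1 - Real.sqrt x) ^ p)
        (p * (1 - Real.sqrt x) ^ (p-1) * (-(2 * Real.sqrt x)⁻¹)) x :=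
      (Real.hasDerivAt_rpow_const (p := p) (Or.inl (by nlinarith))).comp x h1
    have g2 : HasDerivAt (fun x : ℝ => (1 + Real.sqrt x) ^ p)
        (p * (1 + Real.sqrt x) ^ (p-1) * (2 * Real.sqrt x)⁻¹) x :=
      (Real.hasDerivAt_rpow_const (p := p) (Or.inl (by nlinarith))).comp x h2
    exact g1.add g2
  have heq : ∀ x ∈ Ioo (0:ℝ) 1, deriv f x = f₁ x := fun x hx => (haux x hx).deriv
  have haux2 : ∀ x ∈ Ioo (0:ℝ) 1, HasDerivAt f₁
      ((p/(4 * Real.sqrt x ^ 3)) * ((1 - (2-p) * Real.sqrt x) * (1 - Real.sqrt x) ^ (p-1-1)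
        - (1 + (2-p) * Real.sqrt x) * (1 + Real.sqrt x) ^ (p-1-1))) x := by
    intro x hx
    have hs0 : 0 < Real.sqrt x := Real.sqrt_pos.2 hx.1
    have hs1 : Real.sqrt x < 1 := by
      rw [show (1:ℝ) = Real.sqrt 1 by simp]
      exact Real.sqrt_lt_sqrt hx.1.le hx.2
    have h1m : (0:ℝ) < 1 - Real.sqrt x := by linarith
    have h1p : (0:ℝ) < 1 + Real.sqrt x := by linarith
    have hsq : HasDerivAt Real.sqrt ((2 * Real.sqrt x)⁻¹) x := by
      simpa [one_div] using Real.hasDerivAt_sqrt hx.1.ne'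
    have h1 : HasDerivAt (fun x : ℝ => 1 - Real.sqrt x) (-(2 * Real.sqrt x)⁻¹) x :=
      hsq.const_sub 1
    have h2 : HasDerivAt (fun x : ℝ => 1 + Real.sqrt x) ((2 * Real.sqrt x)⁻¹) x :=
      hsq.const_add 1
    have hA : HasDerivAt (fun x : ℝ => (1 - Real.sqrt x) ^ (p-1))
        ((p-1) * (1 - Real.sqrt x) ^ (p-1-1) * (-(2 * Real.sqrt x)⁻¹)) x :=
      by
        have := (Real.hasDerivAt_rpow_const (x := 1 - Real.sqrt x) (p := p-1) (Or.inl h1m.ne')).comp x h1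
        exact this
    have hB : HasDerivAt (fun x : ℝ => (1 + Real.sqrt x) ^ (p-1))
        ((p-1) * (1 + Real.sqrt x) ^ (p-1-1) * (2 * Real.sqrt x)⁻¹) x :=
      by
        have := (Real.hasDerivAt_rpow_const (x := 1 + Real.sqrt x) (p := p-1) (Or.inl h1p.ne')).comp x h2
        exact this
    have h2s : HasDerivAt (fun x : ℝ => 2 * Real.sqrt x) (2 * (2 * Real.sqrt x)⁻¹) x :=
      hsq.const_mul 2
    have hI : HasDerivAt (fun x : ℝ => (2 * Real.sqrt x)⁻¹)
        (-(2 * (2 * Real.sqrt x)⁻¹) / (2 * Real.sqrt x) ^ 2) x :=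
      h2s.inv (by positivity)
    have htot := ((hA.const_mul p).mul hI.neg).add ((hB.const_mul p).mul hI)
    refine HasDerivAt.congr_deriv (f := f₁) htot ?_
    simp only [Pi.neg_apply]
    have e1 : (1 - Real.sqrt x) ^ (p-1) = (1 - Real.sqrt x) ^ (p-1-1) * (1 - Real.sqrt x) := by
      rw [← Real.rpow_add_one h1m.ne']; congr 1; ring
    have e2 : (1 + Real.sqrt x) ^ (p-1) = (1 + Real.sqrt x) ^ (p-1-1) * (1 + Real.sqrt x) := by
      rw [← Real.rpow_add_one h1p.ne']; congr 1; ring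
    rw [e1, e2]
    have hsne : Real.sqrt x ≠ 0 := hs0.ne'
    field_simp
    ring
  apply concaveOn_of_deriv2_nonpos (convex_Icc 0 1)
  · apply ContinuousOn.add
    · exact ((continuous_const.sub Real.continuous_sqrt).rpow_const
        (fun x => Or.inr hp0.le)).continuousOn
    · exact ((continuous_const.add Real.continuous_sqrt).rpow_const
        (fun x => Or.inr hp0.le)).continuousOn
  · rw [interior_Icc]
    exact fun x hx => (haux x hx).differentiableAt.differentiableWithinAt
  · rw [interior_Icc]
    intro x hx
    have hev : deriv f =ᶠ[nhds x] f₁ :=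
      Filter.eventuallyEq_of_mem (Ioo_mem_nhds hx.1 hx.2) heq
    exact ((haux2 x hx).congr_of_eventuallyEq hev).differentiableAt.differentiableWithinAt
  · rw [interior_Icc]
    intro x hx
    have hev : deriv f =ᶠ[nhds x] f₁ :=
      Filter.eventuallyEq_of_mem (Ioo_mem_nhds hx.1 hx.2) heq
    have hD : HasDerivAt (deriv f)
        ((p/(4 * Real.sqrt x ^ 3)) * ((1 - (2-p) * Real.sqrt x) * (1 - Real.sqrt x) ^ (p-1-1)
        - (1 + (2-p) * Real.sqrt x) * (1 + Real.sqrt x) ^ (p-1-1))) x :=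
      (haux2 x hx).congr_of_eventuallyEq hev
    have : deriv^[2] f x = deriv (deriv f) x := by
      simp [Function.iterate_succ, Function.iterate_zero]
    rw [this, hD.deriv]
    -- now the sign
    have hs0 : 0 < Real.sqrt x := Real.sqrt_pos.2 hx.1
    have hs1 : Real.sqrt x < 1 := by
      rw [show (1:ℝ) = Real.sqrt 1 by simp]
      exact Real.sqrt_lt_sqrt hx.1.le hx.2
    set s := Real.sqrt x
    have h1m : (0:ℝ) < 1 - s := by linarith
    have h1p : (0:ℝ) < 1 + s := by linarith
    have hkey := key_ineq (2-p) (by linarith) hs0.le hs1.le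
    have ha' : (0:ℝ) < (1-s) ^ (p-1-1) := Real.rpow_pos_of_pos h1m _
    have hb' : (0:ℝ) < (1+s) ^ (p-1-1) := Real.rpow_pos_of_pos h1p _
    have hpa : (1-s) ^ (2-p) * (1-s) ^ (p-1-1) = 1 := by
      rw [← Real.rpow_add h1m, show 2-p+(p-1-1) = (0:ℝ) from by ring, Real.rpow_zero]
    have hpb : (1+s) ^ (2-p) * (1+s) ^ (p-1-1) = 1 := by
      rw [← Real.rpow_add h1p, show 2-p+(p-1-1) = (0:ℝ) from by ring, Real.rpow_zero]
    have h := mul_le_mul_of_nonneg_right hkey (mul_pos ha' hb').le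
    have hL : (1-(2-p)*s) * (1+s) ^ (2-p) * ((1-s) ^ (p-1-1) * (1+s) ^ (p-1-1))
        = (1-(2-p)*s) * (1-s) ^ (p-1-1) := by
      rw [show (1-(2-p)*s) * (1+s) ^ (2-p) * ((1-s) ^ (p-1-1) * (1+s) ^ (p-1-1))
          = (1-(2-p)*s) * (1-s) ^ (p-1-1) * ((1+s) ^ (2-p) * (1+s) ^ (p-1-1)) from by ring,
        hpb, mul_one]
    have hR : (1+(2-p)*s) * (1-s) ^ (2-p) * ((1-s) ^ (p-1-1) * (1+s) ^ (p-1-1))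
        = (1+(2-p)*s) * (1+s) ^ (p-1-1) := by
      rw [show (1+(2-p)*s) * (1-s) ^ (2-p) * ((1-s) ^ (p-1-1) * (1+s) ^ (p-1-1))
          = (1+(2-p)*s) * (1+s) ^ (p-1-1) * ((1-s) ^ (2-p) * (1-s) ^ (p-1-1)) from by ring,
        hpa, mul_one]
    rw [hL, hR] at h
    have hc1 : (0:ℝ) ≤ p / (4 * s ^ 3) := by positivity
    have hc2 : (1-(2-p)*s) * (1-s) ^ (p-1-1) - (1+(2-p)*s) * (1+s) ^ (p-1-1) ≤ 0 := by
      linarith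
    exact mul_nonpos_of_nonneg_of_nonpos hc1 hc2
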